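/- arXiv:2401.04657 — 9 statements merged into one kernel-verified Lean document; each statement's English description precedes it below -/
import Mathlib

section
/- Let x ∈ X and let V ∈ ∂_C P_K(x) be any Clarke generalized Jacobian of the metric projection P_K at x. Then V is a self-adjoint and positive semidefinite linear operator on X. -/
open RealInnerProductSpace Filter Topology

variable {X : Type*} [NormedAddCommGroup X] [InnerProductSpace ℝ X] [FiniteDimensional ℝ X]

/-- The Clarke generalized Jacobian of a map `F : X → X` at `x`: the convex hull of all
limits of Fréchet derivatives of `F` along sequences of differentiability points
converging to `x`. -/
def clarkeJacobian (F : X → X) (x : X) : Set (X →L[ℝ] X) :=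
  convexHull ℝ {V : X →L[ℝ] X | ∃ u : ℕ → X,
    (∀ k, DifferentiableAt ℝ F (u k)) ∧
    Tendsto u atTop (𝓝 x) ∧
    Tendsto (fun k => fderiv ℝ F (u k)) atTop (𝓝 V)}

/-- `P` is the metric projection onto `K`: `P z` belongs to `K` and is a nearest point
of `K` to `z`. -/
def IsMetricProjection (K : Set X) (P : X → X) : Prop :=
  ∀ z : X, P z ∈ K ∧ ∀ y ∈ K, ‖z - P z‖ ≤ ‖z - y‖

section aux

set_option linter.unusedSectionVars false

variable {K : Set X} {P : X → X}

/-- Variational inequality characterizing the projection. -/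
lemma varIneq (hconv : Convex ℝ K) (hP : IsMetricProjection K P) (z : X) :
    ∀ y ∈ K, ⟪z - P z, y - P z⟫ ≤ 0 := by
  have hmem := (hP z).1
  have hinf : ‖z - P z‖ = ⨅ w : K, ‖z - w‖ := by
    haveI : Nonempty K := ⟨⟨P z, hmem⟩⟩
    refine le_antisymm (le_ciInf fun w => (hP z).2 w w.2)
      (ciInf_le (f := fun w : K => ‖z - w‖) ⟨0, by rintro _ ⟨_, rfl⟩; exact norm_nonneg _⟩ ⟨P z, hmem⟩)
  exact (norm_eq_iInf_iff_real_inner_le_zero hconv hmem).1 hinf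

/-- Monotonicity of the projection. -/
lemma monoP (hconv : Convex ℝ K) (hP : IsMetricProjection K P) (u v : X) :
    ‖P u - P v‖ ^ 2 ≤ ⟪P u - P v, u - v⟫ := by
  have h1 := varIneq hconv hP u (P v) (hP v).1
  have h2 := varIneq hconv hP v (P u) (hP u).1
  have e : ‖P u - P v‖ ^ 2 = ⟪P u - P v, P u - P v⟫ := (real_inner_self_eq_norm_sq _).symm
  rw [e]
  simp only [inner_sub_left, inner_sub_right] at h1 h2 ⊢
  have c1 := real_inner_comm u (P u)
  have c2 := real_inner_comm u (P v)
  have c3 := real_inner_comm v (P u)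
  have c4 := real_inner_comm v (P v)
  have c5 := real_inner_comm (P u) (P v)
  linarith

/-- The projection is nonexpansive. -/
lemma lipP (hconv : Convex ℝ K) (hP : IsMetricProjection K P) (u v : X) :
    ‖P u - P v‖ ≤ ‖u - v‖ := by
  have h1 := monoP hconv hP u v
  have h2 := real_inner_le_norm (P u - P v) (u - v)
  nlinarith [norm_nonneg (P u - P v), norm_nonneg (u - v)]

/-- The projection maximizes `⟪z, y⟫ - ‖y‖²/2` over `y ∈ K`. -/
lemma gKey (hP : IsMetricProjection K P) (z w : X) :
    ⟪z, P w⟫ - ‖P w‖ ^ 2 / 2 ≤ ⟪z, P z⟫ - ‖P z‖ ^ 2 / 2 := by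
  have h := (hP z).2 (P w) (hP w).1
  have h2 : ‖z - P z‖ ^ 2 ≤ ‖z - P w‖ ^ 2 := by
    have := norm_nonneg (z - P z); nlinarith
  rw [norm_sub_sq_real, norm_sub_sq_real] at h2
  linarith

/-- The convex potential `g w = ⟪w, P w⟫ - ‖P w‖²/2` has gradient `P z` at `z`. -/
lemma gDeriv (hconv : Convex ℝ K) (hP : IsMetricProjection K P) (z : X) :
    HasFDerivAt (fun w : X => ⟪w, P w⟫ - ‖P w‖ ^ 2 / 2) (innerSL ℝ (P z)) z := by
  rw [hasFDerivAt_iff_isLittleO_nhds_zero, Asymptotics.isLittleO_iff]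
  intro c hc
  filter_upwards [Metric.ball_mem_nhds (0 : X) hc] with h hh
  have hh' : ‖h‖ < c := by simpa [dist_eq_norm] using hh
  set w := z + h with hw
  have hwz : w - z = h := by simp [hw]
  have c1 : ⟪P z, w - z⟫ = ⟪w, P z⟫ - ⟪z, P z⟫ := by
    rw [inner_sub_right, real_inner_comm (P z) w, real_inner_comm (P z) z]
  have key1 : (0 : ℝ) ≤ (⟪w, P w⟫ - ‖P w‖ ^ 2 / 2) - (⟪z, P z⟫ - ‖P z‖ ^ 2 / 2)
      - ⟪P z, w - z⟫ := by
    have h1 := gKey hP w z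
    rw [c1]; linarith
  have key2 : (⟪w, P w⟫ - ‖P w‖ ^ 2 / 2) - (⟪z, P z⟫ - ‖P z‖ ^ 2 / 2) - ⟪P z, w - z⟫
      ≤ ‖h‖ * ‖h‖ := by
    have h1 := gKey hP z w
    have h2 : ⟪w - z, P w - P z⟫ ≤ ‖h‖ * ‖h‖ := by
      calc ⟪w - z, P w - P z⟫ ≤ ‖w - z‖ * ‖P w - P z‖ := real_inner_le_norm _ _
        _ ≤ ‖h‖ * ‖h‖ := by
            rw [hwz]
            exact mul_le_mul_of_nonneg_left (hwz ▸ lipP hconv hP w z) (norm_nonneg _)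
    rw [c1]
    rw [inner_sub_left, inner_sub_right, inner_sub_right] at h2
    linarith
  have habs : ‖(⟪w, P w⟫ - ‖P w‖ ^ 2 / 2) - (⟪z, P z⟫ - ‖P z‖ ^ 2 / 2) - ⟪P z, w - z⟫‖
      ≤ ‖h‖ * ‖h‖ := by
    rw [Real.norm_eq_abs, abs_of_nonneg key1]; exact key2
  have e1 : (innerSL ℝ (P z)) h = ⟪P z, w - z⟫ := by rw [hwz]; rfl
  simp only [e1, hw]
  calc ‖(⟪z + h, P (z + h)⟫ - ‖P (z + h)‖ ^ 2 / 2) - (⟪z, P z⟫ - ‖P z‖ ^ 2 / 2)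
        - ⟪P z, w - z⟫‖ ≤ ‖h‖ * ‖h‖ := habs
    _ ≤ c * ‖h‖ := mul_le_mul_of_nonneg_right hh'.le (norm_nonneg _)

/-- At a point of differentiability, the derivative of the projection is self-adjoint. -/
lemma selfAdj_at (hconv : Convex ℝ K) (hP : IsMetricProjection K P) {z : X}
    (hd : DifferentiableAt ℝ P z) :
    ∀ v w : X, ⟪fderiv ℝ P z v, w⟫ = ⟪v, fderiv ℝ P z w⟫ := by
  intro v w
  set D := fderiv ℝ P z
  have hP' : HasFDerivAt P D z := hd.hasFDerivAt
  have hcomp : HasFDerivAt (fun y : X => innerSL ℝ (P y)) ((innerSL ℝ (E := X)).comp D) z :=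
    (innerSL ℝ).hasFDerivAt.comp z hP'
  have hsym := second_derivative_symmetric (f := fun w : X => ⟪w, P w⟫ - ‖P w‖ ^ 2 / 2)
    (fun y => gDeriv hconv hP y) hcomp v w
  simp only [ContinuousLinearMap.coe_comp', Function.comp_apply, innerSL_apply_apply] at hsym
  rw [hsym, real_inner_comm]

/-- At a point of differentiability, the derivative of the projection is positive
semidefinite. -/
lemma psd_at (hconv : Convex ℝ K) (hP : IsMetricProjection K P) {z : X}
    (hd : DifferentiableAt ℝ P z) (h : X) : 0 ≤ ⟪fderiv ℝ P z h, h⟫ := by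
  set D := fderiv ℝ P z
  have hP' : HasFDerivAt P D z := hd.hasFDerivAt
  have hφ : HasDerivAt (fun t : ℝ => P (z + t • h)) (D h) 0 := by
    have hl : HasDerivAt (fun t : ℝ => z + t • h) h 0 := by
      simpa using ((hasDerivAt_id (0:ℝ)).smul_const h).const_add z
    have hP'' : HasFDerivAt P D (z + (0:ℝ) • h) := by simpa using hP'
    exact hP''.comp_hasDerivAt 0 hl
  have hψ : HasDerivAt (fun t : ℝ => ⟪h, P (z + t • h)⟫) ⟪h, D h⟫ 0 := by
    have := (innerSL ℝ h).hasFDerivAt.comp_hasDerivAt 0 hφ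
    exact this
  have hslope := hasDerivAt_iff_tendsto_slope.1 hψ
  have hslope' : Tendsto (slope (fun t : ℝ => ⟪h, P (z + t • h)⟫) 0) (𝓝[>] 0)
      (𝓝 ⟪h, D h⟫) :=
    hslope.mono_left (nhdsWithin_mono 0 fun t ht => ne_of_gt ht)
  have hnn : ∀ᶠ t in 𝓝[>] (0:ℝ),
      0 ≤ slope (fun t : ℝ => ⟪h, P (z + t • h)⟫) 0 t := by
    filter_upwards [self_mem_nhdsWithin] with t ht
    have ht' : (0:ℝ) < t := ht
    have hmono := monoP hconv hP (z + t • h) z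
    have h1 : 0 ≤ ⟪P (z + t • h) - P z, t • h⟫ := by
      have hsq := sq_nonneg ‖P (z + t • h) - P z‖
      have : z + t • h - z = t • h := by abel
      rw [this] at hmono
      linarith
    have h2 : 0 ≤ ⟪h, P (z + t • h) - P z⟫ := by
      rw [real_inner_smul_right] at h1
      rw [real_inner_comm]
      nlinarith
    rw [slope_def_field]
    simp only [zero_smul, add_zero, sub_zero]
    apply div_nonneg _ ht'.le
    rw [inner_sub_right] at h2
    linarith
  have hD : 0 ≤ ⟪h, D h⟫ := ge_of_tendsto hslope' hnn
  rw [real_inner_comm]; exact hD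

end aux

/-- Every Clarke generalized Jacobian of the metric projection onto a nonempty closed
convex cone is self-adjoint and positive semidefinite. -/
theorem clarkeJacobian_proj_selfAdjoint_posSemidef
    (K : Set X) (hne : K.Nonempty) (hcl : IsClosed K) (hconv : Convex ℝ K)
    (hcone : ∀ c : ℝ, 0 ≤ c → ∀ y ∈ K, c • y ∈ K)
    (P : X → X) (hP : IsMetricProjection K P)
    (x : X) (V : X →L[ℝ] X) (hV : V ∈ clarkeJacobian P x) :
    (∀ u w : X, ⟪V u, w⟫ = ⟪u, V w⟫) ∧ (∀ u : X, 0 ≤ ⟪V u, u⟫) := by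
  set S : Set (X →L[ℝ] X) :=
    {W : X →L[ℝ] X | (∀ u w : X, ⟪W u, w⟫ = ⟪u, W w⟫) ∧ (∀ u : X, 0 ≤ ⟪W u, u⟫)} with hS
  have hSconv : Convex ℝ S := by
    intro A hA B hB a b ha hb hab
    constructor
    · intro u w
      have : (a • A + b • B) u = a • A u + b • B u := by simp
      have that : (a • A + b • B) w = a • A w + b • B w := by simp
      rw [this, that, inner_add_left, inner_add_right, real_inner_smul_left,
        real_inner_smul_left, real_inner_smul_right, real_inner_smul_right,
        hA.1 u w, hB.1 u w]
    · intro u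
      have : (a • A + b • B) u = a • A u + b • B u := by simp
      rw [this, inner_add_left, real_inner_smul_left, real_inner_smul_left]
      have := hA.2 u; have := hB.2 u
      positivity
  have hbase : {W : X →L[ℝ] X | ∃ u : ℕ → X,
      (∀ k, DifferentiableAt ℝ P (u k)) ∧
      Tendsto u atTop (𝓝 x) ∧
      Tendsto (fun k => fderiv ℝ P (u k)) atTop (𝓝 W)} ⊆ S := by
    rintro W ⟨u, hdiff, -, hlim⟩
    have happly : ∀ a : X, Tendsto (fun k => fderiv ℝ P (u k) a) atTop (𝓝 (W a)) := by
      intro a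
      exact (ContinuousLinearMap.apply ℝ X a).continuous.continuousAt.tendsto.comp hlim
    constructor
    · intro a b
      have h1 : Tendsto (fun k => ⟪fderiv ℝ P (u k) a, b⟫) atTop (𝓝 ⟪W a, b⟫) :=
        (happly a).inner tendsto_const_nhds
      have h2 : Tendsto (fun k => ⟪a, fderiv ℝ P (u k) b⟫) atTop (𝓝 ⟪a, W b⟫) :=
        tendsto_const_nhds.inner (happly b)
      have heq : (fun k => ⟪fderiv ℝ P (u k) a, b⟫) = fun k => ⟪a, fderiv ℝ P (u k) b⟫ := by
        funext k; exact selfAdj_at hconv hP (hdiff k) a b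
      rw [heq] at h1
      exact tendsto_nhds_unique h1 h2
    · intro a
      have h1 : Tendsto (fun k => ⟪fderiv ℝ P (u k) a, a⟫) atTop (𝓝 ⟪W a, a⟫) :=
        (happly a).inner tendsto_const_nhds
      exact ge_of_tendsto h1 (Eventually.of_forall fun k => psd_at hconv hP (hdiff k) a)
  exact convexHull_min hbase hSconv hV
end

section
/- Let x ∈ X and let V ∈ ∂_C P_K(x) be any Clarke generalized Jacobian of the metric projection P_K at x. Then V(x) applied to x recovers the projection: Vx = P_K(x). -/
open RealInnerProductSpace Filter Topology

variable {X : Type*} [NormedAddCommGroup X] [InnerProductSpace ℝ X] [FiniteDimensional ℝ X]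

/-- Uniqueness of the nearest point in a convex set. -/
lemma metricProj_unique {K : Set X} (hconv : Convex ℝ K) {P : X → X}
    (hP : IsMetricProjection K P) {z a : X} (ha : a ∈ K)
    (hmin : ∀ y ∈ K, ‖z - a‖ ≤ ‖z - y‖) : a = P z := by
  have hb := (hP z).1
  have hba : ‖z - P z‖ ≤ ‖z - a‖ := (hP z).2 a ha
  have hab : ‖z - a‖ ≤ ‖z - P z‖ := hmin _ hb
  have hm : (1/2 : ℝ) • a + (1/2 : ℝ) • P z ∈ K := hconv ha hb (by norm_num) (by norm_num) (by norm_num)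
  have hzm : ‖z - a‖ ≤ ‖z - ((1/2 : ℝ) • a + (1/2 : ℝ) • P z)‖ := hmin _ hm
  have hpar := parallelogram_law_with_norm ℝ (z - a) (z - P z)
  have h2 : (z - a) + (z - P z) = (2 : ℝ) • (z - ((1/2 : ℝ) • a + (1/2 : ℝ) • P z)) := by
    module
  have h3 : ‖(z - a) + (z - P z)‖ = 2 * ‖z - ((1/2 : ℝ) • a + (1/2 : ℝ) • P z)‖ := by
    rw [h2, norm_smul]; simp
  have h4 : (z - a) - (z - P z) = P z - a := by abel
  have hnn : (0:ℝ) ≤ ‖z - a‖ := norm_nonneg _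
  have hd : ‖P z - a‖ = 0 := by
    have h5 : ‖P z - a‖^2 ≤ 0 := by
      rw [h3, h4] at hpar
      nlinarith [norm_nonneg (P z - a), norm_nonneg (z - ((1/2 : ℝ) • a + (1/2 : ℝ) • P z))]
    nlinarith [norm_nonneg (P z - a)]
  exact (sub_eq_zero.mp (norm_eq_zero.mp hd)).symm


/-- The variational inequality for the metric projection. -/
lemma metricProj_inner_le {K : Set X} (hne : K.Nonempty) (hconv : Convex ℝ K) {P : X → X}
    (hP : IsMetricProjection K P) (z : X) : ∀ y ∈ K, ⟪z - P z, y - P z⟫ ≤ 0 := by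
  have : Nonempty K := hne.to_subtype
  have h1 : ‖z - P z‖ = ⨅ w : K, ‖z - w‖ :=
    le_antisymm (le_ciInf fun w => (hP z).2 w w.2)
      (ciInf_le (f := fun w : K => ‖z - w‖) ⟨0, fun b ⟨w, hw⟩ => hw ▸ norm_nonneg _⟩ ⟨P z, (hP z).1⟩)
  exact (norm_eq_iInf_iff_real_inner_le_zero hconv (hP z).1).mp h1

/-- The metric projection is 1-Lipschitz. -/
lemma metricProj_lipschitz {K : Set X} (hne : K.Nonempty) (hconv : Convex ℝ K) {P : X → X}
    (hP : IsMetricProjection K P) (z w : X) : ‖P z - P w‖ ≤ ‖z - w‖ := by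
  have h1 := metricProj_inner_le hne hconv hP z (P w) (hP w).1
  have h2 := metricProj_inner_le hne hconv hP w (P z) (hP z).1
  have key : ‖P z - P w‖ ^ 2 ≤ ⟪z - w, P z - P w⟫ := by
    have e1 : ⟪z - P z, P w - P z⟫ + ⟪w - P w, P z - P w⟫
        = -⟪z - w, P z - P w⟫ + ⟪P z - P w, P z - P w⟫ := by
      simp only [inner_sub_left, inner_sub_right]
      ring
    have e2 : ⟪P z - P w, P z - P w⟫ = ‖P z - P w‖ ^ 2 := real_inner_self_eq_norm_sq _
    linarith
  have hcs := real_inner_le_norm (z - w) (P z - P w)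
  nlinarith [norm_nonneg (P z - P w), norm_nonneg (z - w)]

/-- Positive homogeneity of the projection onto a cone. -/
lemma metricProj_homog {K : Set X} (hconv : Convex ℝ K)
    (hcone : ∀ c : ℝ, 0 ≤ c → ∀ y ∈ K, c • y ∈ K) {P : X → X}
    (hP : IsMetricProjection K P) {c : ℝ} (hc : 0 < c) (z : X) : P (c • z) = c • P z := by
  refine (metricProj_unique hconv hP (hcone c hc.le _ (hP z).1) ?_).symm
  intro y hy
  have hy' : c⁻¹ • y ∈ K := hcone c⁻¹ (by positivity) y hy
  have := (hP z).2 _ hy'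
  calc ‖c • z - c • P z‖ = c * ‖z - P z‖ := by
        rw [← smul_sub, norm_smul, Real.norm_of_nonneg hc.le]
    _ ≤ c * ‖z - c⁻¹ • y‖ := by nlinarith
    _ = ‖c • z - y‖ := by
        rw [show c • z - y = c • (z - c⁻¹ • y) by rw [smul_sub, smul_inv_smul₀ hc.ne'],
          norm_smul, Real.norm_of_nonneg hc.le]

/-- At a point of differentiability, the derivative applied to the point itself gives `P`. -/
lemma metricProj_fderiv_self {K : Set X} (hconv : Convex ℝ K)
    (hcone : ∀ c : ℝ, 0 ≤ c → ∀ y ∈ K, c • y ∈ K) {P : X → X}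
    (hP : IsMetricProjection K P) {u : X} (hd : DifferentiableAt ℝ P u) :
    fderiv ℝ P u u = P u := by
  have hline : HasDerivAt (fun t : ℝ => t • u) u 1 := by
    simpa using (hasDerivAt_id (1 : ℝ)).smul_const u
  have hF : HasFDerivAt P (fderiv ℝ P u) ((1:ℝ) • u) := by simpa using hd.hasFDerivAt
  have hcomp : HasDerivAt (fun t : ℝ => P (t • u)) (fderiv ℝ P u u) 1 := by
    exact hF.comp_hasDerivAt 1 hline
  have heq : (fun t : ℝ => P (t • u)) =ᶠ[𝓝 (1 : ℝ)] fun t => t • P u := by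
    filter_upwards [Ioi_mem_nhds (show (0:ℝ) < 1 by norm_num)] with t ht
    exact metricProj_homog hconv hcone hP ht u
  have hlin : HasDerivAt (fun t : ℝ => t • P u) (P u) 1 := by
    simpa using (hasDerivAt_id (1 : ℝ)).smul_const (P u)
  have : HasDerivAt (fun t : ℝ => P (t • u)) (P u) 1 := hlin.congr_of_eventuallyEq heq
  exact hcomp.unique this
/-- Every Clarke generalized Jacobian `V` of the metric projection onto a nonempty closed
convex cone at `x` satisfies `V x = P x`. -/
theorem clarkeJacobian_proj_apply_self
    (K : Set X) (hne : K.Nonempty) (hcl : IsClosed K) (hconv : Convex ℝ K)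
    (hcone : ∀ c : ℝ, 0 ≤ c → ∀ y ∈ K, c • y ∈ K)
    (P : X → X) (hP : IsMetricProjection K P)
    (x : X) (V : X →L[ℝ] X) (hV : V ∈ clarkeJacobian P x) :
    V x = P x := by
  have hsub : {W : X →L[ℝ] X | ∃ u : ℕ → X,
      (∀ k, DifferentiableAt ℝ P (u k)) ∧
      Tendsto u atTop (𝓝 x) ∧
      Tendsto (fun k => fderiv ℝ P (u k)) atTop (𝓝 W)} ⊆ {W : X →L[ℝ] X | W x = P x} := by
    rintro W ⟨u, hdiff, hux, hW⟩
    have h1 : Tendsto (fun k => (fderiv ℝ P (u k)) (u k)) atTop (𝓝 (W x)) := by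
      have hc : Continuous fun p : (X →L[ℝ] X) × X => p.1 p.2 :=
        isBoundedBilinearMap_apply.continuous
      exact (hc.tendsto (W, x)).comp (hW.prodMk_nhds hux)
    have h2 : ∀ k, (fderiv ℝ P (u k)) (u k) = P (u k) := fun k =>
      metricProj_fderiv_self hconv hcone hP (hdiff k)
    have hPc : Continuous P := by
      rw [Metric.continuous_iff]
      intro z ε hε
      exact ⟨ε, hε, fun w hw => by
        rw [dist_eq_norm] at *
        exact lt_of_le_of_lt (metricProj_lipschitz hne hconv hP w z) hw⟩
    have h3 : Tendsto (fun k => P (u k)) atTop (𝓝 (P x)) :=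
      (hPc.tendsto x).comp hux
    rw [funext h2] at h1
    exact tendsto_nhds_unique h1 h3
  have hconvex : Convex ℝ {W : X →L[ℝ] X | W x = P x} := by
    intro A hA B hB a b ha hb hab
    simp only [Set.mem_setOf_eq] at *
    simp [ContinuousLinearMap.add_apply, ContinuousLinearMap.smul_apply, hA, hB,
      ← add_smul, hab]
  exact convexHull_min hsub hconvex hV
end

section
/- Let x, y ∈ X and let V ∈ ∂_C P_K(x) be any Clarke generalized Jacobian of the metric projection P_K at x. Then ‖P_K(y) − P_K(x) − V(y − x)‖ ≤ ‖y − x‖. -/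
open RealInnerProductSpace Filter Topology

variable {X : Type*} [NormedAddCommGroup X] [InnerProductSpace ℝ X] [FiniteDimensional ℝ X]

/-!
The variational inequality for nearest points makes the metric projection firmly nonexpansive:
`P u - P v` lies in the closed ball of radius `‖u - v‖ / 2` about `(u - v) / 2`, i.e.
`P - ½ id` is `½`-Lipschitz. Hence every Fréchet derivative of `P` lies in the operator-norm ball
of radius `½` about `½ id`; this ball is closed and convex, so it contains the whole Clarke
Jacobian. Thus `P y - P x` and `V (y - x)` both lie in the ball of radius `‖y - x‖ / 2` about
`(y - x) / 2`, whose diameter is `‖y - x‖`.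
-/

section

variable {E : Type*} [NormedAddCommGroup E] [InnerProductSpace ℝ E]

namespace IsMetricProjection

variable {K : Set E} {P : E → E}

theorem inner_sub_le_zero (hconv : Convex ℝ K) (hP : IsMetricProjection K P) (u : E)
    {z : E} (hz : z ∈ K) : ⟪u - P u, z - P u⟫ ≤ 0 := by
  have : Nonempty K := ⟨⟨P u, (hP u).1⟩⟩
  refine (norm_eq_iInf_iff_real_inner_le_zero hconv (hP u).1).mp ?_ z hz
  exact le_antisymm (le_ciInf fun w => (hP u).2 w w.2)
    (ciInf_le ⟨0, Set.forall_mem_range.2 fun _ => norm_nonneg _⟩ (⟨P u, (hP u).1⟩ : K))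

theorem norm_sub_sq_le_inner (hconv : Convex ℝ K) (hP : IsMetricProjection K P) (u v : E) :
    ‖P u - P v‖ ^ 2 ≤ ⟪P u - P v, u - v⟫ := by
  have hu := hP.inner_sub_le_zero hconv u (hP v).1
  have hv := hP.inner_sub_le_zero hconv v (hP u).1
  have hsum : ⟪P u - P v, u - v⟫ - ‖P u - P v‖ ^ 2
      = -⟪u - P u, P v - P u⟫ - ⟪v - P v, P u - P v⟫ := by
    rw [← real_inner_self_eq_norm_sq]
    simp only [inner_sub_left, inner_sub_right, real_inner_comm]
    ring
  linarith

theorem dist_sub_half_smul_le (hconv : Convex ℝ K) (hP : IsMetricProjection K P) (u v : E) :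
    dist (P u - P v) ((2 : ℝ)⁻¹ • (u - v)) ≤ 2⁻¹ * ‖u - v‖ := by
  have hfirm := hP.norm_sub_sq_le_inner hconv u v
  rw [dist_eq_norm, ← sq_le_sq₀ (norm_nonneg _) (by positivity), norm_sub_sq_real, norm_smul,
    real_inner_smul_right, Real.norm_of_nonneg (by norm_num)]
  nlinarith

theorem lipschitzWith_sub_half_smul (hconv : Convex ℝ K) (hP : IsMetricProjection K P) :
    LipschitzWith 2⁻¹ (fun z => P z - (2 : ℝ)⁻¹ • z) := by
  refine LipschitzWith.of_dist_le_mul fun u v => ?_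
  rw [dist_eq_norm, dist_eq_norm, NNReal.coe_inv, NNReal.coe_ofNat,
    show P u - (2 : ℝ)⁻¹ • u - (P v - (2 : ℝ)⁻¹ • v) = P u - P v - (2 : ℝ)⁻¹ • (u - v) by module,
    ← dist_eq_norm]
  exact hP.dist_sub_half_smul_le hconv u v

theorem fderiv_mem_closedBall (hconv : Convex ℝ K) (hP : IsMetricProjection K P) {u : E}
    (hd : DifferentiableAt ℝ P u) :
    fderiv ℝ P u ∈ Metric.closedBall ((2 : ℝ)⁻¹ • ContinuousLinearMap.id ℝ E) 2⁻¹ := by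
  have h := norm_fderiv_le_of_lipschitz ℝ (x₀ := u) (hP.lipschitzWith_sub_half_smul hconv)
  have hD : HasFDerivAt (fun z => P z - (2 : ℝ)⁻¹ • z)
      (fderiv ℝ P u - (2 : ℝ)⁻¹ • ContinuousLinearMap.id ℝ E) u :=
    hd.hasFDerivAt.sub ((hasFDerivAt_id u).const_smul _)
  rw [hD.fderiv] at h
  simpa [Metric.mem_closedBall, dist_eq_norm] using h

end IsMetricProjection

theorem clarkeJacobian_subset_of_fderiv_mem {F : E → E} {S : Set (E →L[ℝ] E)}
    (hclosed : IsClosed S) (hconv : Convex ℝ S)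
    (hS : ∀ u, DifferentiableAt ℝ F u → fderiv ℝ F u ∈ S) (x : E) :
    clarkeJacobian F x ⊆ S :=
  convexHull_min (fun _ ⟨_, hd, _, hlim⟩ =>
    hclosed.mem_of_tendsto hlim (Eventually.of_forall fun k => hS _ (hd k))) hconv

end

theorem clarkeJacobian_proj_linearization_bound_general
    (K : Set X) (hconv : Convex ℝ K)
    (P : X → X) (hP : IsMetricProjection K P)
    (x y : X) (V : X →L[ℝ] X) (hV : V ∈ clarkeJacobian P x) :
    ‖P y - P x - V (y - x)‖ ≤ ‖y - x‖ := by
  have hVball : V ∈ Metric.closedBall ((2 : ℝ)⁻¹ • ContinuousLinearMap.id ℝ X) 2⁻¹ :=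
    clarkeJacobian_subset_of_fderiv_mem Metric.isClosed_closedBall
      (convex_closedBall ((2 : ℝ)⁻¹ • ContinuousLinearMap.id ℝ X) 2⁻¹)
      (fun _ hd => hP.fderiv_mem_closedBall hconv hd) x hV
  have hVdist : dist (V (y - x)) ((2 : ℝ)⁻¹ • (y - x)) ≤ 2⁻¹ * ‖y - x‖ := by
    calc dist (V (y - x)) ((2 : ℝ)⁻¹ • (y - x))
        = ‖(V - (2 : ℝ)⁻¹ • ContinuousLinearMap.id ℝ X) (y - x)‖ := by simp [dist_eq_norm]
      _ ≤ ‖V - (2 : ℝ)⁻¹ • ContinuousLinearMap.id ℝ X‖ * ‖y - x‖ :=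
          ContinuousLinearMap.le_opNorm _ _
      _ ≤ 2⁻¹ * ‖y - x‖ := by gcongr; exact mem_closedBall_iff_norm.mp hVball
  calc ‖P y - P x - V (y - x)‖
      ≤ dist (P y - P x) ((2 : ℝ)⁻¹ • (y - x)) + dist (V (y - x)) ((2 : ℝ)⁻¹ • (y - x)) := by
        rw [← dist_eq_norm]; exact dist_triangle_right _ _ _
    _ ≤ ‖y - x‖ := by linarith [hP.dist_sub_half_smul_le hconv y x]

/-- For a Clarke generalized Jacobian `V` of the metric projection at `x`, the linearization
error is bounded: `‖P y − P x − V (y − x)‖ ≤ ‖y − x‖`. -/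
theorem clarkeJacobian_proj_linearization_bound
    (K : Set X) (hne : K.Nonempty) (hcl : IsClosed K) (hconv : Convex ℝ K)
    (hcone : ∀ c : ℝ, 0 ≤ c → ∀ y ∈ K, c • y ∈ K)
    (P : X → X) (hP : IsMetricProjection K P)
    (x y : X) (V : X →L[ℝ] X) (hV : V ∈ clarkeJacobian P x) :
    ‖P y - P x - V (y - x)‖ ≤ ‖y - x‖ :=
  clarkeJacobian_proj_linearization_bound_general K hconv P hP x y V hV
end

section
/- Let T : X → X be an invertible linear operator with ‖T⁻¹‖ < 1 (operator norm). Then for every b ∈ X the equation P_K(x) + Tx = b has exactly one solution x ∈ X. -/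
open RealInnerProductSpace Filter Topology

variable {X : Type*} [NormedAddCommGroup X] [InnerProductSpace ℝ X] [FiniteDimensional ℝ X]

/-!
The metric projection onto a convex set is nonexpansive, by its variational inequality.
Hence `x ↦ T⁻¹ (b - P x)` is a contraction with constant `‖T⁻¹‖ < 1`, its fixed points are
exactly the solutions of `P x + T x = b`, and the Banach fixed-point theorem applies in the
complete space `X`.
-/

section MetricProjection

variable {F : Type*} [NormedAddCommGroup F] [InnerProductSpace ℝ F] {K : Set F} {P : F → F}

theorem IsMetricProjection.real_inner_sub_le_zero (hK : Convex ℝ K) (hP : IsMetricProjection K P)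
    (z : F) {w : F} (hw : w ∈ K) : ⟪z - P z, w - P z⟫ ≤ 0 := by
  have : Nonempty K := ⟨⟨P z, (hP z).1⟩⟩
  have hbdd : BddBelow (Set.range fun w : K => ‖z - w‖) :=
    ⟨0, Set.forall_mem_range.2 fun _ => norm_nonneg _⟩
  refine (norm_eq_iInf_iff_real_inner_le_zero hK (hP z).1).1 ?_ w hw
  exact le_antisymm (le_ciInf fun w => (hP z).2 w w.2) (ciInf_le hbdd ⟨P z, (hP z).1⟩)

theorem IsMetricProjection.norm_sub_sq_le_inner_s5 (hK : Convex ℝ K) (hP : IsMetricProjection K P)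
    (x y : F) : ‖P x - P y‖ ^ 2 ≤ ⟪x - y, P x - P y⟫ := by
  -- sum the variational inequalities at `x` (tested with `P y`) and at `y` (tested with `P x`)
  have hx := hP.real_inner_sub_le_zero hK x (hP y).1
  have hy := hP.real_inner_sub_le_zero hK y (hP x).1
  have expand : ⟪x - P x, P y - P x⟫ + ⟪y - P y, P x - P y⟫
      = ‖P x - P y‖ ^ 2 - ⟪x - y, P x - P y⟫ := by
    simp only [inner_sub_left, inner_sub_right, ← real_inner_self_eq_norm_sq]
    rw [real_inner_comm (P y) (P x)]
    ring
  linarith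

theorem IsMetricProjection.lipschitzWith_one (hK : Convex ℝ K) (hP : IsMetricProjection K P) :
    LipschitzWith 1 P := by
  refine LipschitzWith.of_dist_le_mul fun x y => ?_
  rw [NNReal.coe_one, one_mul, dist_eq_norm, dist_eq_norm]
  have hsq : ‖P x - P y‖ * ‖P x - P y‖ ≤ ‖x - y‖ * ‖P x - P y‖ := by
    rw [← sq]; exact (hP.norm_sub_sq_le_inner_s5 hK x y).trans (real_inner_le_norm _ _)
  rcases (norm_nonneg (P x - P y)).eq_or_lt with h0 | hpos
  · rw [← h0]; exact norm_nonneg _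
  · exact le_of_mul_le_mul_right hsq hpos

end MetricProjection

section InverseContraction

variable {𝕜 E : Type*} [NontriviallyNormedField 𝕜] [NormedAddCommGroup E] [NormedSpace 𝕜 E]

theorem add_apply_eq_iff_isFixedPt {T S : E →L[𝕜] E} (hTS : T * S = 1) (hST : S * T = 1)
    (P : E → E) (b x : E) : P x + T x = b ↔ Function.IsFixedPt (fun x => S (b - P x)) x := by
  rw [← eq_sub_iff_add_eq', Function.IsFixedPt]
  constructor
  · intro h
    rw [← h]
    exact DFunLike.congr_fun hST x
  · intro h
    calc T x = T (S (b - P x)) := by rw [h]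
      _ = b - P x := DFunLike.congr_fun hTS _

theorem contractingWith_apply_sub {T : E →L[𝕜] E} {P : E → E} {L : NNReal}
    (hP : LipschitzWith L P) (hT : ‖T‖₊ * L < 1) (b : E) :
    ContractingWith (‖T‖₊ * L) (fun x => T (b - P x)) :=
  ⟨hT, T.lipschitz.comp (by simpa using (LipschitzWith.const b).sub hP)⟩

theorem existsUnique_add_apply_eq_of_lipschitzWith [CompleteSpace E] {P : E → E} {L : NNReal}
    (hP : LipschitzWith L P) {T S : E →L[𝕜] E} (hTS : T * S = 1) (hST : S * T = 1)
    (hS : ‖S‖₊ * L < 1) (b : E) : ∃! x, P x + T x = b := by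
  have hf := contractingWith_apply_sub hP hS b
  simp only [add_apply_eq_iff_isFixedPt hTS hST]
  exact ⟨_, hf.fixedPoint_isFixedPt, fun y hy => hf.fixedPoint_unique hy⟩

end InverseContraction

theorem projEquation_existsUnique_of_inv_norm_lt_one_general
    (K : Set X) (hconv : Convex ℝ K)
    (P : X → X) (hP : IsMetricProjection K P)
    (T S : X →L[ℝ] X) (hTS : T * S = 1) (hST : S * T = 1) (hS : ‖S‖ < 1)
    (b : X) :
    ∃! x : X, P x + T x = b :=
  existsUnique_add_apply_eq_of_lipschitzWith (hP.lipschitzWith_one hconv) hTS hST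
    (by rw [mul_one, ← NNReal.coe_lt_coe]; exact hS) b

/-- If `T` is an invertible linear operator with `‖T⁻¹‖ < 1`, then the projection equation
`P x + T x = b` has exactly one solution for every `b`. -/
theorem projEquation_existsUnique_of_inv_norm_lt_one
    (K : Set X) (hne : K.Nonempty) (hcl : IsClosed K) (hconv : Convex ℝ K)
    (hcone : ∀ c : ℝ, 0 ≤ c → ∀ y ∈ K, c • y ∈ K)
    (P : X → X) (hP : IsMetricProjection K P)
    (T S : X →L[ℝ] X) (hTS : T * S = 1) (hST : S * T = 1) (hS : ‖S‖ < 1)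
    (b : X) :
    ∃! x : X, P x + T x = b :=
  projEquation_existsUnique_of_inv_norm_lt_one_general K hconv P hP T S hTS hST hS b
end

section
/- Let T : X → X be a linear operator, b ∈ X, and let (x^k) ⊆ X and linear operators V_k with V_k ∈ ∂_C P_K(x^k) and (V_k + T)x^{k+1} = b for all k ∈ ℕ. If the sequence (x^k) converges to a point x̄ ∈ X, then x̄ solves the projection equation: P_K(x̄) + T x̄ = b. -/
open RealInnerProductSpace Filter Topology

variable {X : Type*} [NormedAddCommGroup X] [InnerProductSpace ℝ X] [FiniteDimensional ℝ X]

/-- Variational inequality for a nearest point. -/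
lemma varineq_of_nearest {K : Set X} (hconv : Convex ℝ K) {z p : X} (hp : p ∈ K)
    (hmin : ∀ y ∈ K, ‖z - p‖ ≤ ‖z - y‖) : ∀ y ∈ K, ⟪z - p, y - p⟫ ≤ 0 := by
  have hinf : ‖z - p‖ = ⨅ w : K, ‖z - w‖ := by
    haveI : Nonempty K := ⟨⟨p, hp⟩⟩
    refine le_antisymm (le_ciInf fun w => hmin w w.2) ?_
    exact ciInf_le ⟨0, fun r hr => by obtain ⟨w, rfl⟩ := hr; positivity⟩ (⟨p, hp⟩ : K)
  exact (norm_eq_iInf_iff_real_inner_le_zero hconv hp).1 hinf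

lemma nearest_unique {K : Set X} (hconv : Convex ℝ K) {z p q : X} (hp : p ∈ K) (hq : q ∈ K)
    (hpm : ∀ y ∈ K, ‖z - p‖ ≤ ‖z - y‖) (hqm : ∀ y ∈ K, ‖z - q‖ ≤ ‖z - y‖) : p = q := by
  have h1 := varineq_of_nearest hconv hp hpm q hq
  have h2 := varineq_of_nearest hconv hq hqm p hp
  have hsum : ⟪z - p, q - p⟫ + ⟪z - q, p - q⟫ = ⟪q - p, q - p⟫ := by
    rw [show p - q = -(q - p) by abel, inner_neg_right, ← sub_eq_add_neg, ← inner_sub_left]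
    congr 1; abel
  have hle : ‖q - p‖ ^ 2 ≤ 0 := by
    rw [← real_inner_self_eq_norm_sq, ← hsum]; linarith
  have : q - p = 0 :=
    norm_eq_zero.1 (le_antisymm (by nlinarith [norm_nonneg (q - p)]) (norm_nonneg (q - p)))
  exact (sub_eq_zero.1 this).symm

lemma proj_lipschitz {K : Set X} (hconv : Convex ℝ K) {P : X → X}
    (hP : IsMetricProjection K P) : LipschitzWith 1 P := by
  refine LipschitzWith.of_dist_le_mul fun z w => ?_
  simp only [NNReal.coe_one, one_mul, dist_eq_norm]
  have h1 := varineq_of_nearest hconv (hP z).1 (hP z).2 (P w) (hP w).1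
  have h2 := varineq_of_nearest hconv (hP w).1 (hP w).2 (P z) (hP z).1
  have key : ‖P z - P w‖ ^ 2 ≤ ⟪z - w, P z - P w⟫ := by
    have hsum : ⟪z - P z, P w - P z⟫ + ⟪w - P w, P z - P w⟫
        = ⟪P z - P w, P z - P w⟫ - ⟪z - w, P z - P w⟫ := by
      simp only [inner_sub_left, inner_sub_right]; ring
    rw [← real_inner_self_eq_norm_sq]; linarith
  have h3 : ⟪z - w, P z - P w⟫ ≤ ‖z - w‖ * ‖P z - P w‖ := real_inner_le_norm _ _
  nlinarith [norm_nonneg (P z - P w), norm_nonneg (z - w)]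

lemma proj_homog {K : Set X} (hconv : Convex ℝ K)
    (hcone : ∀ c : ℝ, 0 ≤ c → ∀ y ∈ K, c • y ∈ K) {P : X → X}
    (hP : IsMetricProjection K P) {c : ℝ} (hc : 0 ≤ c) (z : X) : P (c • z) = c • P z := by
  rcases eq_or_lt_of_le hc with rfl | hc'
  · have h0 : (0:X) ∈ K := by
      simpa using hcone 0 le_rfl (P 0) (hP 0).1
    have : P 0 = 0 := by
      have := (hP 0).2 0 h0
      simp only [sub_zero, norm_zero] at this
      have := le_antisymm ((by simpa [norm_sub_rev, zero_sub] using this)) (norm_nonneg (P 0))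
      simpa [neg_eq_zero] using norm_eq_zero.1 this
    simpa [this]
  · refine nearest_unique hconv (hP (c • z)).1 (hcone c hc (P z) (hP z).1) (hP (c • z)).2 ?_
    intro y hy
    have hy' : c⁻¹ • y ∈ K := hcone c⁻¹ (by positivity) y hy
    have := (hP z).2 _ hy'
    calc ‖c • z - c • P z‖ = c * ‖z - P z‖ := by
          rw [← smul_sub, norm_smul, Real.norm_of_nonneg hc]
      _ ≤ c * ‖z - c⁻¹ • y‖ := by nlinarith
      _ = ‖c • z - y‖ := by
          have he : c • z - y = c • (z - c⁻¹ • y) := by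
            rw [smul_sub, smul_inv_smul₀ hc'.ne']
          rw [he, norm_smul, Real.norm_of_nonneg hc]

lemma euler_identity {P : X → X}
    (hhom : ∀ c : ℝ, 0 ≤ c → ∀ z, P (c • z) = c • P z) {u : X}
    (hdiff : DifferentiableAt ℝ P u) : fderiv ℝ P u u = P u := by
  have hg : HasDerivAt (fun t : ℝ => u + t • u) u 0 := by
    simpa using ((hasDerivAt_id (0:ℝ)).smul_const u).const_add u
  have h1 : HasDerivAt (fun t : ℝ => P (u + t • u)) (fderiv ℝ P u u) 0 := by
    have hf : HasFDerivAt P (fderiv ℝ P u) (u + (0:ℝ) • u) := by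
      simpa using hdiff.hasFDerivAt
    exact hf.comp_hasDerivAt 0 hg
  have h2 : HasDerivAt (fun t : ℝ => P u + t • P u) (P u) 0 := by
    simpa using ((hasDerivAt_id (0:ℝ)).smul_const (P u)).const_add (P u)
  have heq : (fun t : ℝ => P (u + t • u)) =ᶠ[𝓝 (0:ℝ)] fun t => P u + t • P u := by
    filter_upwards [Ioi_mem_nhds (show (-1:ℝ) < 0 by norm_num)] with t ht
    have h1t : (0:ℝ) ≤ 1 + t := by have := Set.mem_Ioi.mp ht; linarith
    have : u + t • u = (1 + t) • u := by rw [add_smul, one_smul]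
    rw [this, hhom _ h1t, add_smul, one_smul]
  exact h1.unique (h2.congr_of_eventuallyEq heq)

lemma clarke_apply_self {P : X → X} (hcont : Continuous P)
    (hhom : ∀ c : ℝ, 0 ≤ c → ∀ z, P (c • z) = c • P z) {x : X} {V : X →L[ℝ] X}
    (hV : V ∈ clarkeJacobian P x) : V x = P x := by
  have hsub : clarkeJacobian P x ⊆ {W : X →L[ℝ] X | W x = P x} := by
    refine convexHull_min ?_ ?_
    · rintro W ⟨u, hdiff, hu, hW⟩
      have hA : Tendsto (fun k => (fderiv ℝ P (u k)) (u k)) atTop (𝓝 (W x)) := by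
        have : Continuous fun p : (X →L[ℝ] X) × X => p.1 p.2 :=
          isBoundedBilinearMap_apply.continuous
        exact (this.tendsto (W, x)).comp (hW.prodMk_nhds hu)
      have hB : Tendsto (fun k => (fderiv ℝ P (u k)) (u k)) atTop (𝓝 (P x)) := by
        have : ∀ k, (fderiv ℝ P (u k)) (u k) = P (u k) := fun k =>
          euler_identity hhom (hdiff k)
        simp only [this]
        exact (hcont.tendsto x).comp hu
      exact tendsto_nhds_unique hA hB
    · intro V hV W hW a b ha hb hab
      simp only [Set.mem_setOf_eq] at *
      simp [ContinuousLinearMap.add_apply, ContinuousLinearMap.smul_apply, hV, hW, ← add_smul,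
        hab]
  exact hsub hV

lemma clarke_norm_le {P : X → X} (hlip : LipschitzWith 1 P) {x : X} {V : X →L[ℝ] X}
    (hV : V ∈ clarkeJacobian P x) : ‖V‖ ≤ 1 := by
  have hsub : clarkeJacobian P x ⊆ Metric.closedBall (0 : X →L[ℝ] X) 1 := by
    refine convexHull_min ?_ (convex_closedBall _ _)
    rintro W ⟨u, hdiff, hu, hW⟩
    rw [Metric.mem_closedBall, dist_zero_right]
    have hb : ∀ k, ‖fderiv ℝ P (u k)‖ ≤ 1 := fun k => by
      simpa using norm_fderiv_le_of_lipschitz ℝ (x₀ := u k) hlip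
    exact le_of_tendsto ((continuous_norm.tendsto W).comp hW) (Eventually.of_forall hb)
  simpa using Metric.mem_closedBall.1 (hsub hV)

/-- If a semi-smooth Newton sequence `(V_k + T) x^{k+1} = b`, with
`V_k ∈ ∂_C P (x^k)`, converges to a point `x̄`, then `x̄` solves the projection equation
`P x̄ + T x̄ = b`. -/
theorem semismoothNewton_limit_solves
    (K : Set X) (hne : K.Nonempty) (hcl : IsClosed K) (hconv : Convex ℝ K)
    (hcone : ∀ c : ℝ, 0 ≤ c → ∀ y ∈ K, c • y ∈ K)
    (P : X → X) (hP : IsMetricProjection K P)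
    (T : X →L[ℝ] X) (b : X) (xs : ℕ → X) (Vs : ℕ → X →L[ℝ] X)
    (hVs : ∀ k, Vs k ∈ clarkeJacobian P (xs k))
    (hiter : ∀ k, (Vs k + T) (xs (k + 1)) = b)
    (xb : X) (hlim : Tendsto xs atTop (𝓝 xb)) :
    P xb + T xb = b := by
  have hlip : LipschitzWith 1 P := proj_lipschitz hconv hP
  have hhom : ∀ c : ℝ, 0 ≤ c → ∀ z, P (c • z) = c • P z := fun c hc z =>
    proj_homog hconv hcone hP hc z
  have hself : ∀ k, Vs k (xs k) = P (xs k) := fun k =>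
    clarke_apply_self hlip.continuous hhom (hVs k)
  have hnorm : ∀ k, ‖Vs k‖ ≤ 1 := fun k => clarke_norm_le hlip (hVs k)
  -- the sequence f is constantly b
  set f : ℕ → X := fun k => P (xs k) + T (xs (k + 1)) + Vs k (xs (k + 1) - xs k) with hf
  have hfb : ∀ k, f k = b := by
    intro k
    have h := hiter k
    simp only [ContinuousLinearMap.add_apply] at h
    simp only [hf, map_sub, hself k]
    rw [← h]; abel
  have hlim' : Tendsto (fun k => xs (k + 1)) atTop (𝓝 xb) :=
    hlim.comp (tendsto_add_atTop_nat 1)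
  have h1 : Tendsto (fun k => P (xs k)) atTop (𝓝 (P xb)) :=
    (hlip.continuous.tendsto xb).comp hlim
  have h2 : Tendsto (fun k => T (xs (k + 1))) atTop (𝓝 (T xb)) :=
    (T.continuous.tendsto xb).comp hlim'
  have h3 : Tendsto (fun k => Vs k (xs (k + 1) - xs k)) atTop (𝓝 0) := by
    have hd : Tendsto (fun k => ‖xs (k + 1) - xs k‖) atTop (𝓝 0) := by
      have : Tendsto (fun k => xs (k + 1) - xs k) atTop (𝓝 (xb - xb)) := hlim'.sub hlim
      simpa [Function.comp_def] using (continuous_norm.tendsto _).comp this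
    refine squeeze_zero_norm (fun k => ?_) hd
    calc ‖Vs k (xs (k + 1) - xs k)‖ ≤ ‖Vs k‖ * ‖xs (k + 1) - xs k‖ :=
          (Vs k).le_opNorm _
      _ ≤ 1 * ‖xs (k + 1) - xs k‖ := by
          have := hnorm k; nlinarith [norm_nonneg (xs (k + 1) - xs k)]
      _ = ‖xs (k + 1) - xs k‖ := one_mul _
  have hft : Tendsto f atTop (𝓝 (P xb + T xb + 0)) := (h1.add h2).add h3
  have hfc : Tendsto f atTop (𝓝 b) := by
    simp only [funext hfb]; exact tendsto_const_nhds
  have := tendsto_nhds_unique hft hfc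
  simpa using this
end

section
/- Let T : X → X be a self-adjoint positive definite linear operator (⟨Tu, u⟩ > 0 for all u ≠ 0). Then for every b ∈ X the equation P_K(x) + Tx = b has exactly one solution x ∈ X. -/
open RealInnerProductSpace Filter Topology

variable {X : Type*} [NormedAddCommGroup X] [InnerProductSpace ℝ X] [FiniteDimensional ℝ X]

/-- If `T` is a self-adjoint positive definite linear operator, then the projection equation
`P x + T x = b` has exactly one solution for every `b`. -/
theorem projEquation_existsUnique_of_posDef
    (K : Set X) (hne : K.Nonempty) (hcl : IsClosed K) (hconv : Convex ℝ K)
    (hcone : ∀ c : ℝ, 0 ≤ c → ∀ y ∈ K, c • y ∈ K)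
    (P : X → X) (hP : IsMetricProjection K P)
    (T : X →L[ℝ] X) (hsa : ∀ u w : X, ⟪T u, w⟫ = ⟪u, T w⟫)
    (hpd : ∀ u : X, u ≠ 0 → 0 < ⟪T u, u⟫)
    (b : X) :
    ∃! x : X, P x + T x = b := by
  -- variational inequality for the projection
  have hVI : ∀ z : X, ∀ y ∈ K, ⟪z - P z, y - P z⟫ ≤ 0 := by
    intro z y hy
    haveI : Nonempty K := hne.to_subtype
    have hPz := (hP z).1
    have hinf : ‖z - P z‖ = ⨅ w : K, ‖z - (w : X)‖ := by
      apply le_antisymm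
      · exact le_ciInf fun w => (hP z).2 w w.2
      · have hbdd : BddBelow (Set.range fun w : K => ‖z - (w : X)‖) :=
          ⟨0, by rintro r ⟨w, rfl⟩; exact norm_nonneg _⟩
        exact ciInf_le hbdd ⟨P z, hPz⟩
    exact ((norm_eq_iInf_iff_real_inner_le_zero hconv hPz).mp hinf) y hy
  -- monotonicity of the projection
  have hmono : ∀ x y : X, ⟪P x - P y, P x - P y⟫ ≤ ⟪P x - P y, x - y⟫ := by
    intro x y
    have h1 := hVI x (P y) (hP y).1
    have h2 := hVI y (P x) (hP x).1
    have key : (0:ℝ) ≤ ⟪P x - P y, (x - P x) - (y - P y)⟫ := by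
      rw [inner_sub_right]
      have e1 : ⟪P x - P y, x - P x⟫ = -⟪x - P x, P y - P x⟫ := by
        rw [real_inner_comm, ← inner_neg_right, neg_sub]
      have e2 : ⟪P x - P y, y - P y⟫ = ⟪y - P y, P x - P y⟫ := real_inner_comm _ _
      rw [e1, e2]; linarith
    calc ⟪P x - P y, P x - P y⟫
        ≤ ⟪P x - P y, (x - P x) - (y - P y)⟫ + ⟪P x - P y, P x - P y⟫ := by linarith
      _ = ⟪P x - P y, x - y⟫ := by rw [← inner_add_right]; congr 1; abel
  -- the projection is 1-Lipschitz
  have hlipP : ∀ x y : X, ‖P x - P y‖ ≤ ‖x - y‖ := by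
    intro x y
    rcases eq_or_lt_of_le (norm_nonneg (P x - P y)) with h | h
    · rw [← h]; exact norm_nonneg _
    · have h1 := hmono x y
      have h2 := real_inner_le_norm (P x - P y) (x - y)
      rw [real_inner_self_eq_norm_sq] at h1
      nlinarith
  -- uniqueness of solutions
  have huniq : ∀ x y : X, P x + T x = b → P y + T y = b → x = y := by
    intro x y hx hy
    by_contra hne'
    have hd : x - y ≠ 0 := sub_ne_zero.mpr hne'
    have h0 : (P x - P y) + (T x - T y) = 0 := by
      have h' : (P x - P y) + (T x - T y) = (P x + T x) - (P y + T y) := by abel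
      rw [h', hx, hy, sub_self]
    have hPeq : P x - P y = -(T (x - y)) := by
      rw [map_sub]; exact eq_neg_of_add_eq_zero_left h0
    have h1 := hmono x y
    rw [hPeq] at h1
    simp only [inner_neg_left, inner_neg_right, neg_neg] at h1
    have h2 := hpd (x - y) hd
    have h3 : (0:ℝ) ≤ ⟪T (x - y), T (x - y)⟫ := real_inner_self_nonneg
    linarith
  -- existence
  by_cases hX : ∃ u : X, u ≠ 0
  · obtain ⟨u₀, hu₀⟩ := hX
    -- coercivity constant from compactness of the sphere
    obtain ⟨c, hc, hcT, hcoer⟩ :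
        ∃ c : ℝ, 0 < c ∧ c ≤ ‖T‖ ∧ ∀ u : X, c * ‖u‖ ^ 2 ≤ ⟪T u, u⟫ := by
      have hsph : (Metric.sphere (0:X) 1).Nonempty := by
        refine ⟨‖u₀‖⁻¹ • u₀, ?_⟩
        simp [norm_smul, abs_of_nonneg, inv_mul_cancel₀ (norm_ne_zero_iff.mpr hu₀)]
      have hcont : ContinuousOn (fun u : X => ⟪T u, u⟫) (Metric.sphere 0 1) :=
        (Continuous.inner T.continuous continuous_id).continuousOn
      obtain ⟨m, hmS, hmin⟩ := (isCompact_sphere (0:X) 1).exists_isMinOn hsph hcont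
      have hm1 : ‖m‖ = 1 := by simpa using hmS
      have hc : 0 < ⟪T m, m⟫ := hpd m (by intro h; rw [h] at hm1; simp at hm1)
      refine ⟨⟪T m, m⟫, hc, ?_, ?_⟩
      · have h1 : ⟪T m, m⟫ ≤ ‖T m‖ * ‖m‖ := real_inner_le_norm (T m) m
        have h2 : ‖T m‖ ≤ ‖T‖ * ‖m‖ := T.le_opNorm m
        rw [hm1, mul_one] at h1 h2
        linarith
      · intro u
        rcases eq_or_ne u 0 with rfl | hu
        · simp
        · have hnu : (0:ℝ) < ‖u‖ := norm_pos_iff.mpr hu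
          have hv : ‖u‖⁻¹ • u ∈ Metric.sphere (0:X) 1 := by
            simp [norm_smul, abs_of_nonneg, inv_mul_cancel₀ hnu.ne']
          have hbound : ⟪T m, m⟫ ≤ ⟪T (‖u‖⁻¹ • u), ‖u‖⁻¹ • u⟫ := hmin hv
          have heq : ⟪T (‖u‖⁻¹ • u), ‖u‖⁻¹ • u⟫ = ‖u‖⁻¹ * (‖u‖⁻¹ * ⟪T u, u⟫) := by
            rw [map_smul, real_inner_smul_left, real_inner_smul_right]
          rw [heq] at hbound
          have h2 : ⟪T m, m⟫ * ‖u‖ ^ 2 ≤ (‖u‖⁻¹ * (‖u‖⁻¹ * ⟪T u, u⟫)) * ‖u‖ ^ 2 := by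
            nlinarith [sq_nonneg ‖u‖]
          have hI : ‖u‖⁻¹ * ‖u‖ = 1 := inv_mul_cancel₀ hnu.ne'
          calc ⟪T m, m⟫ * ‖u‖ ^ 2
              ≤ (‖u‖⁻¹ * (‖u‖⁻¹ * ⟪T u, u⟫)) * ‖u‖ ^ 2 := h2
            _ = (‖u‖⁻¹ * ‖u‖) * ((‖u‖⁻¹ * ‖u‖) * ⟪T u, u⟫) := by ring
            _ = ⟪T u, u⟫ := by rw [hI]; ring
    -- Lipschitz constant
    obtain ⟨L, hL1, hcL, hFlip⟩ :
        ∃ L : ℝ, 1 ≤ L ∧ c < L ∧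
          ∀ x y : X, ‖(P x + T x) - (P y + T y)‖ ≤ L * ‖x - y‖ := by
      refine ⟨‖T‖ + 1, by linarith [norm_nonneg T], by linarith, ?_⟩
      intro x y
      have h1 : (P x + T x) - (P y + T y) = (P x - P y) + T (x - y) := by
        rw [map_sub]; abel
      rw [h1]
      calc ‖(P x - P y) + T (x - y)‖ ≤ ‖P x - P y‖ + ‖T (x - y)‖ := norm_add_le _ _
        _ ≤ ‖x - y‖ + ‖T‖ * ‖x - y‖ := add_le_add (hlipP x y) (T.le_opNorm _)
        _ = (‖T‖ + 1) * ‖x - y‖ := by ring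
    have hL0 : (0:ℝ) < L := by linarith
    -- strong monotonicity of F = P + T
    have hFmono : ∀ x y : X, c * ‖x - y‖ ^ 2 ≤ ⟪(P x + T x) - (P y + T y), x - y⟫ := by
      intro x y
      have h1 : (P x + T x) - (P y + T y) = (P x - P y) + T (x - y) := by
        rw [map_sub]; abel
      rw [h1, inner_add_left]
      have h2 : (0:ℝ) ≤ ⟪P x - P y, x - y⟫ :=
        le_trans real_inner_self_nonneg (hmono x y)
      have h3 := hcoer (x - y)
      linarith
    -- the contraction G
    obtain ⟨t, ht⟩ : ∃ t : ℝ, t = c / L ^ 2 := ⟨_, rfl⟩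
    have ht0 : 0 < t := ht ▸ div_pos hc (by positivity)
    obtain ⟨q, hq⟩ : ∃ q : ℝ, q = 1 - c ^ 2 / L ^ 2 := ⟨_, rfl⟩
    have hq0 : 0 ≤ q := by
      rw [hq]
      have h : c ^ 2 / L ^ 2 ≤ 1 := by
        rw [div_le_one (by positivity)]
        nlinarith
      linarith
    have hq1 : q < 1 := by
      rw [hq]
      have h : 0 < c ^ 2 / L ^ 2 := by positivity
      linarith
    set G : X → X := fun x => x - t • (P x + T x - b) with hG_def
    -- squared contraction estimate
    have hGsq : ∀ x y : X, ‖G x - G y‖ ^ 2 ≤ q * ‖x - y‖ ^ 2 := by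
      intro x y
      have hGxy : G x - G y = (x - y) - t • ((P x + T x) - (P y + T y)) := by
        simp only [hG_def, smul_sub]
        abel
      rw [hGxy, norm_sub_sq_real]
      have e1 : ⟪x - y, t • ((P x + T x) - (P y + T y))⟫
          = t * ⟪(P x + T x) - (P y + T y), x - y⟫ := by
        rw [real_inner_smul_right, real_inner_comm]
      have e2 : ‖t • ((P x + T x) - (P y + T y))‖ ^ 2
          = t ^ 2 * ‖(P x + T x) - (P y + T y)‖ ^ 2 := by
        rw [norm_smul, mul_pow, Real.norm_eq_abs, sq_abs]
      rw [e1, e2]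
      have h1 := hFmono x y
      have h2 := hFlip x y
      have h3 : ‖(P x + T x) - (P y + T y)‖ ^ 2 ≤ L ^ 2 * ‖x - y‖ ^ 2 := by
        have hn := norm_nonneg ((P x + T x) - (P y + T y))
        nlinarith
      have ha : t * (c * ‖x - y‖ ^ 2) ≤ t * ⟪(P x + T x) - (P y + T y), x - y⟫ :=
        mul_le_mul_of_nonneg_left h1 ht0.le
      have hb' : t ^ 2 * ‖(P x + T x) - (P y + T y)‖ ^ 2
          ≤ t ^ 2 * (L ^ 2 * ‖x - y‖ ^ 2) :=
        mul_le_mul_of_nonneg_left h3 (sq_nonneg t)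
      have hid : t ^ 2 * (L ^ 2 * ‖x - y‖ ^ 2) = c ^ 2 / L ^ 2 * ‖x - y‖ ^ 2 := by
        rw [ht]; field_simp
      have hid2 : t * (c * ‖x - y‖ ^ 2) = c ^ 2 / L ^ 2 * ‖x - y‖ ^ 2 := by
        rw [ht]; field_simp
      rw [hid] at hb'
      rw [hid2] at ha
      rw [hq]
      linarith
    -- G is Lipschitz with constant √q < 1
    obtain ⟨kappa, hk⟩ : ∃ k : ℝ, k = Real.sqrt q := ⟨_, rfl⟩
    have hk0 : 0 ≤ kappa := hk ▸ Real.sqrt_nonneg q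
    have hk1 : kappa < 1 := by
      rw [hk]
      calc Real.sqrt q < Real.sqrt 1 := Real.sqrt_lt_sqrt hq0 hq1
        _ = 1 := Real.sqrt_one
    have hGlip : ∀ x y : X, dist (G x) (G y) ≤ kappa * dist x y := by
      intro x y
      rw [dist_eq_norm, dist_eq_norm]
      have h1 := hGsq x y
      have h2 : ‖G x - G y‖ = Real.sqrt (‖G x - G y‖ ^ 2) :=
        (Real.sqrt_sq (norm_nonneg _)).symm
      rw [h2, hk]
      calc Real.sqrt (‖G x - G y‖ ^ 2) ≤ Real.sqrt (q * ‖x - y‖ ^ 2) :=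
            Real.sqrt_le_sqrt h1
        _ = Real.sqrt q * Real.sqrt (‖x - y‖ ^ 2) := Real.sqrt_mul hq0 _
        _ = Real.sqrt q * ‖x - y‖ := by rw [Real.sqrt_sq (norm_nonneg _)]
    have hcontr : ContractingWith kappa.toNNReal G := by
      constructor
      · rw [← NNReal.coe_lt_one, Real.coe_toNNReal _ hk0]; exact hk1
      · apply LipschitzWith.of_dist_le_mul
        intro x y
        rw [Real.coe_toNNReal _ hk0]
        exact hGlip x y
    haveI : Nonempty X := ⟨0⟩
    have hfix : G (ContractingWith.fixedPoint G hcontr) = ContractingWith.fixedPoint G hcontr :=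
      hcontr.fixedPoint_isFixedPt
    obtain ⟨x₀, hx₀⟩ : ∃ x₀ : X, G x₀ = x₀ := ⟨_, hfix⟩
    have hsol : P x₀ + T x₀ = b := by
      have h1 : x₀ - t • (P x₀ + T x₀ - b) = x₀ := hx₀
      have h2 : t • (P x₀ + T x₀ - b) = 0 := sub_eq_self.mp h1
      rcases smul_eq_zero.mp h2 with h | h
      · exact absurd h ht0.ne'
      · exact sub_eq_zero.mp h
    exact ⟨x₀, hsol, fun y hy => huniq y x₀ hy hsol⟩
  · push_neg at hX
    exact ⟨0, (hX (P 0 + T 0)).trans (hX b).symm, fun y _ => hX y⟩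
end

section
/- Let Q : X → X be a linear operator and q ∈ X. If x ∈ X satisfies the projection equation (Q − I)P_K(x) + x = −q, then x̄ := P_K(x) is a solution of the KKT system for the quadratic conic program min ½⟨x, Qx⟩ + ⟨q, x⟩ over x ∈ K; that is, x̄ ∈ K, Qx̄ + q ∈ K*, and ⟨Qx̄ + q, x̄⟩ = 0. -/
/-!
The projection equation says exactly that `Q x̄ + q = x̄ - x` for `x̄ = P_K x`. By the
variational characterisation of the projection onto the convex set `K`,
`⟪x - x̄, w - x̄⟫ ≤ 0` for all `w ∈ K`; since `K` is a cone, testing with `w = x̄ + z` and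
`w = 0` shows that `x - x̄` lies in the polar cone of `K` and is orthogonal to `x̄`.
-/

open RealInnerProductSpace Filter Topology

variable {X : Type*} [NormedAddCommGroup X] [InnerProductSpace ℝ X] [FiniteDimensional ℝ X]

theorem Convex.add_mem_of_smul_mem {E : Type*} [AddCommMonoid E] [Module ℝ E] {K : Set E}
    (hconv : Convex ℝ K) (hcone : ∀ c : ℝ, 0 ≤ c → ∀ y ∈ K, c • y ∈ K) {y z : E}
    (hy : y ∈ K) (hz : z ∈ K) :
    y + z ∈ K := by
  have hmid := hcone 2 zero_le_two _ (hconv hy hz (by norm_num : (0 : ℝ) ≤ 1 / 2)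
    (by norm_num : (0 : ℝ) ≤ 1 / 2) (by norm_num))
  rwa [smul_add, smul_smul, smul_smul, show (2 : ℝ) * (1 / 2) = 1 by norm_num, one_smul,
    one_smul] at hmid

section InnerProductSpace

variable {E : Type*} [NormedAddCommGroup E] [InnerProductSpace ℝ E]

theorem IsMetricProjection.inner_sub_proj_le_zero {K : Set E} {P : E → E}
    (hconv : Convex ℝ K) (hP : IsMetricProjection K P) (z : E) {w : E} (hw : w ∈ K) :
    ⟪z - P z, w - P z⟫ ≤ 0 := by
  obtain ⟨hPK, hmin⟩ := hP z
  have : Nonempty K := ⟨⟨P z, hPK⟩⟩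
  refine (norm_eq_iInf_iff_real_inner_le_zero hconv hPK).1 ?_ w hw
  exact le_antisymm (le_ciInf fun y => hmin y y.2)
    (ciInf_le ⟨0, Set.forall_mem_range.2 fun _ => norm_nonneg _⟩ (⟨P z, hPK⟩ : K))

theorem inner_le_zero_of_forall_inner_sub_le_zero {K : Set E} (hconv : Convex ℝ K)
    (hcone : ∀ c : ℝ, 0 ≤ c → ∀ y ∈ K, c • y ∈ K) {p v : E} (hp : p ∈ K)
    (hvar : ∀ w ∈ K, ⟪v, w - p⟫ ≤ 0) {z : E} (hz : z ∈ K) : ⟪v, z⟫ ≤ 0 := by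
  simpa using hvar (p + z) (hconv.add_mem_of_smul_mem hcone hp hz)

theorem inner_eq_zero_of_forall_inner_sub_le_zero {K : Set E} (hconv : Convex ℝ K)
    (hcone : ∀ c : ℝ, 0 ≤ c → ∀ y ∈ K, c • y ∈ K) {p v : E} (hp : p ∈ K)
    (hvar : ∀ w ∈ K, ⟪v, w - p⟫ ≤ 0) : ⟪v, p⟫ = 0 := by
  have hzero : ⟪v, 0 - p⟫ ≤ 0 := hvar 0 (by simpa using hcone 0 le_rfl p hp)
  rw [zero_sub, inner_neg_right] at hzero
  linarith [inner_le_zero_of_forall_inner_sub_le_zero hconv hcone hp hvar hp]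

end InnerProductSpace

theorem projEquation_solution_gives_KKT_general
    (K : Set X) (hconv : Convex ℝ K)
    (hcone : ∀ c : ℝ, 0 ≤ c → ∀ y ∈ K, c • y ∈ K)
    (P : X → X) (hP : IsMetricProjection K P)
    (Q : X →L[ℝ] X) (q x : X)
    (hx : (Q - 1) (P x) + x = -q) :
    P x ∈ K ∧ (∀ z ∈ K, 0 ≤ ⟪Q (P x) + q, z⟫) ∧ ⟪Q (P x) + q, P x⟫ = 0 := by
  have hPK : P x ∈ K := (hP x).1
  have hresidual : Q (P x) + q = -(x - P x) := by
    simp only [sub_apply, one_apply_eq_self] at hx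
    linear_combination (norm := module) hx
  have hvar : ∀ w ∈ K, ⟪x - P x, w - P x⟫ ≤ 0 := fun w hw =>
    hP.inner_sub_proj_le_zero hconv x hw
  refine ⟨hPK, fun z hz => ?_, ?_⟩
  · rw [hresidual, inner_neg_left, neg_nonneg]
    exact inner_le_zero_of_forall_inner_sub_le_zero hconv hcone hPK hvar hz
  · rw [hresidual, inner_neg_left, neg_eq_zero]
    exact inner_eq_zero_of_forall_inner_sub_le_zero hconv hcone hPK hvar

/-- If `x` solves the projection equation `(Q − I) (P x) + x = −q`, then `x̄ := P x` solves
the KKT system of the quadratic conic program: `x̄ ∈ K`, `Q x̄ + q ∈ K*`, and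
`⟨Q x̄ + q, x̄⟩ = 0`. -/
theorem projEquation_solution_gives_KKT
    (K : Set X) (hne : K.Nonempty) (hcl : IsClosed K) (hconv : Convex ℝ K)
    (hcone : ∀ c : ℝ, 0 ≤ c → ∀ y ∈ K, c • y ∈ K)
    (P : X → X) (hP : IsMetricProjection K P)
    (Q : X →L[ℝ] X) (q x : X)
    (hx : (Q - 1) (P x) + x = -q) :
    P x ∈ K ∧ (∀ z ∈ K, 0 ≤ ⟪Q (P x) + q, z⟫) ∧ ⟪Q (P x) + q, P x⟫ = 0 :=
  projEquation_solution_gives_KKT_general K hconv hcone P hP Q q x hx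
end

section
/- Let Q : X → X be a positive definite linear operator (⟨Qu, u⟩ > 0 for all u ≠ 0), let x ∈ X, and let V ∈ ∂_C P_K(x) be any Clarke generalized Jacobian of the metric projection P_K at x. Then the operator (Q − I)V + I is invertible. -/
open RealInnerProductSpace Filter Topology

variable {X : Type*} [NormedAddCommGroup X] [InnerProductSpace ℝ X] [FiniteDimensional ℝ X]

/-! A metric projection onto a convex set is firmly nonexpansive:
`‖P a - P b‖² ≤ ⟪a - b, P a - P b⟫`. For a linear map `W` this reads `‖W h‖² ≤ ⟪h, W h⟫`, a
closed convex condition on `W`; it passes from `P` to its Fréchet derivatives (limits of difference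
quotients), then to limits of derivatives and to their convex hull, so it holds for every element
`V` of the Clarke Jacobian. If `((Q - 1) V + 1) h = 0`, then `h = V h - Q (V h)`, hence
`‖V h‖² ≤ ⟪h, V h⟫ = ‖V h‖² - ⟪Q (V h), V h⟫`; positive definiteness forces `V h = 0` and then
`h = 0`. An injective endomorphism of a finite-dimensional space is invertible. -/

section FirmlyNonexpansive

variable {E : Type*} [NormedAddCommGroup E] [InnerProductSpace ℝ E]

def IsFirmlyNonexpansive (F : E → E) : Prop :=
  ∀ a b, ‖F a - F b‖ ^ 2 ≤ ⟪a - b, F a - F b⟫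

theorem IsMetricProjection.inner_sub_nonpos {K : Set E} (hconv : Convex ℝ K) {P : E → E}
    (hP : IsMetricProjection K P) (z : E) {w : E} (hw : w ∈ K) :
    ⟪z - P z, w - P z⟫ ≤ 0 := by
  have : Nonempty K := ⟨⟨P z, (hP z).1⟩⟩
  have hbdd : BddBelow (Set.range fun y : K => ‖z - y‖) :=
    ⟨0, Set.forall_mem_range.mpr fun _ => norm_nonneg _⟩
  have hmin : ‖z - P z‖ = ⨅ y : K, ‖z - y‖ :=
    le_antisymm (le_ciInf fun y => (hP z).2 y y.2) (ciInf_le hbdd ⟨P z, (hP z).1⟩)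
  exact (norm_eq_iInf_iff_real_inner_le_zero hconv (hP z).1).mp hmin w hw

theorem IsMetricProjection.isFirmlyNonexpansive {K : Set E} (hconv : Convex ℝ K) {P : E → E}
    (hP : IsMetricProjection K P) : IsFirmlyNonexpansive P := by
  intro a b
  have ha := hP.inner_sub_nonpos hconv a (hP b).1
  have hb := hP.inner_sub_nonpos hconv b (hP a).1
  have hsplit : a - b = (a - P a) - (b - P b) + (P a - P b) := by abel
  have hswap : P b - P a = -(P a - P b) := by abel
  rw [hswap, inner_neg_right] at ha
  rw [hsplit, inner_add_left, inner_sub_left, real_inner_self_eq_norm_sq]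
  linarith

theorem ContinuousLinearMap.isFirmlyNonexpansive_iff {W : E →L[ℝ] E} :
    IsFirmlyNonexpansive W ↔ ∀ h, ‖W h‖ ^ 2 ≤ ⟪h, W h⟫ :=
  ⟨fun hW h => by simpa using hW h 0, fun hW a b => by simpa only [map_sub] using hW (a - b)⟩

theorem isClosed_setOf_isFirmlyNonexpansive :
    IsClosed {W : E →L[ℝ] E | IsFirmlyNonexpansive W} := by
  simp only [ContinuousLinearMap.isFirmlyNonexpansive_iff, Set.ofPred_forall]
  exact isClosed_iInter fun h => isClosed_le (by fun_prop) (by fun_prop)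

theorem convex_setOf_isFirmlyNonexpansive :
    Convex ℝ {W : E →L[ℝ] E | IsFirmlyNonexpansive W} := by
  simp only [ContinuousLinearMap.isFirmlyNonexpansive_iff, Set.ofPred_forall]
  refine convex_iInter fun h => ?_
  let evalAt : (E →L[ℝ] E) →ₗ[ℝ] E := (ContinuousLinearMap.apply ℝ E h).toLinearMap
  have hconvex : ConvexOn ℝ Set.univ fun W : E →L[ℝ] E => ‖W h‖ ^ 2 - ⟪h, W h⟫ :=
    ((convexOn_univ_norm.pow (fun _ _ => norm_nonneg _) 2).comp_linearMap evalAt).sub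
      (((innerₛₗ ℝ h).comp evalAt).concaveOn convex_univ)
  simpa [sub_nonpos] using hconvex.convex_le 0

theorem IsFirmlyNonexpansive.isFirmlyNonexpansive_fderiv {F : E → E}
    (hF : IsFirmlyNonexpansive F) {u : E} (hd : DifferentiableAt ℝ F u) :
    IsFirmlyNonexpansive (fderiv ℝ F u) := by
  refine ContinuousLinearMap.isFirmlyNonexpansive_iff.mpr fun h => ?_
  have hline : HasDerivAt (fun t : ℝ => F (u + t • h)) (fderiv ℝ F u h) 0 := by
    have hpath : HasDerivAt (fun t : ℝ => u + t • h) h 0 := by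
      simpa using ((hasDerivAt_id (0 : ℝ)).smul_const h).const_add u
    exact hd.hasFDerivAt.comp_hasDerivAt_of_eq 0 hpath (by simp)
  have hslope := hline.tendsto_slope_zero_right
  simp only [zero_add, zero_smul, add_zero] at hslope
  have hclosed : IsClosed {v : E | ‖v‖ ^ 2 ≤ ⟪h, v⟫} :=
    isClosed_le (by fun_prop) (by fun_prop)
  refine hclosed.mem_of_tendsto hslope ?_
  filter_upwards [self_mem_nhdsWithin] with t (ht : 0 < t)
  have hq := hF (u + t • h) u
  rw [add_sub_cancel_left, real_inner_smul_left] at hq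
  set q := F (u + t • h) - F u
  rw [norm_smul, mul_pow, real_inner_smul_right, Real.norm_eq_abs, abs_of_pos (inv_pos.2 ht)]
  calc t⁻¹ ^ 2 * ‖q‖ ^ 2 ≤ t⁻¹ ^ 2 * (t * ⟪h, q⟫) := by gcongr
    _ = t⁻¹ * ⟪h, q⟫ := by field_simp

theorem clarkeJacobian_subset_setOf_isFirmlyNonexpansive {F : E → E}
    (hF : IsFirmlyNonexpansive F) (x : E) :
    clarkeJacobian F x ⊆ {W | IsFirmlyNonexpansive W} :=
  convexHull_min
    (fun _ ⟨_, hdiff, _, hlim⟩ => isClosed_setOf_isFirmlyNonexpansive.mem_of_tendsto hlim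
      (Eventually.of_forall fun k => hF.isFirmlyNonexpansive_fderiv (hdiff k)))
    convex_setOf_isFirmlyNonexpansive

theorem IsFirmlyNonexpansive.injective_mul_sub_one_add_one {V : E →L[ℝ] E}
    (hV : IsFirmlyNonexpansive V) {Q : E →L[ℝ] E} (hQ : ∀ u, u ≠ 0 → 0 < ⟪Q u, u⟫) :
    Function.Injective ((Q - 1) * V + 1 : E →L[ℝ] E) := by
  refine (injective_iff_map_eq_zero _).mpr fun h hh => ?_
  set v := V h
  have hh' : h = v - Q v := by
    have : Q v - v + h = 0 := by simpa using hh
    linear_combination (norm := module) this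
  have hinner : ⟪h, v⟫ = ‖v‖ ^ 2 - ⟪Q v, v⟫ := by
    rw [hh', inner_sub_left, real_inner_self_eq_norm_sq]
  have hv : v = 0 := by
    by_contra hne
    linarith [hQ v hne, ContinuousLinearMap.isFirmlyNonexpansive_iff.mp hV h]
  rw [hh', hv, map_zero, sub_zero]

end FirmlyNonexpansive

theorem ContinuousLinearMap.isUnit_of_injective {𝕜 E : Type*} [NontriviallyNormedField 𝕜]
    [CompleteSpace 𝕜] [NormedAddCommGroup E] [NormedSpace 𝕜 E] [FiniteDimensional 𝕜 E]
    {T : E →L[𝕜] E} (hT : Function.Injective T) : IsUnit T :=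
  have := FiniteDimensional.complete 𝕜 E
  T.isUnit_iff_bijective.mpr ⟨hT, LinearMap.injective_iff_surjective.mp hT⟩

theorem newtonOperator_invertible_of_posDef_general
    (K : Set X) (hconv : Convex ℝ K)
    (P : X → X) (hP : IsMetricProjection K P)
    (Q : X →L[ℝ] X) (hpd : ∀ u : X, u ≠ 0 → 0 < ⟪Q u, u⟫)
    (x : X) (V : X →L[ℝ] X) (hV : V ∈ clarkeJacobian P x) :
    IsUnit ((Q - 1) * V + 1) :=
  ContinuousLinearMap.isUnit_of_injective <|
    IsFirmlyNonexpansive.injective_mul_sub_one_add_one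
      (clarkeJacobian_subset_setOf_isFirmlyNonexpansive (hP.isFirmlyNonexpansive hconv) x hV) hpd

/-- If `Q` is a positive definite linear operator and `V` is any Clarke generalized Jacobian
of the metric projection at `x`, then the operator `(Q − I) V + I` is invertible. -/
theorem newtonOperator_invertible_of_posDef
    (K : Set X) (hne : K.Nonempty) (hcl : IsClosed K) (hconv : Convex ℝ K)
    (hcone : ∀ c : ℝ, 0 ≤ c → ∀ y ∈ K, c • y ∈ K)
    (P : X → X) (hP : IsMetricProjection K P)
    (Q : X →L[ℝ] X) (hpd : ∀ u : X, u ≠ 0 → 0 < ⟪Q u, u⟫)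
    (x : X) (V : X →L[ℝ] X) (hV : V ∈ clarkeJacobian P x) :
    IsUnit ((Q - 1) * V + 1) :=
  newtonOperator_invertible_of_posDef_general K hconv P hP Q hpd x V hV
end

section
/- Let n ≥ 1, let U be a real n×n orthogonal matrix, let Λ be a real n×n diagonal matrix, and set X = U Λ Uᵀ. Let D be the n×n diagonal matrix with D_ii = 1 if Λ_ii > 0 and D_ii = 0 otherwise, and set V = U D Uᵀ. If every diagonal entry of X is strictly positive (X_ii > 0 for all i), then every diagonal entry of V is strictly positive (V_ii > 0 for all i). -/
open Matrix

/-! Both diagonals are sums of the same nonnegative weights `U i j ^ 2`: `X i i` weights them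
with the eigenvalues `Λ j j`, `V i i` with the indicators of `0 < Λ j j`. If `X i i > 0`, some
term `U i j ^ 2 * Λ j j` is positive, so `U i j ≠ 0` and `0 < Λ j j`, and this `j` contributes
`U i j ^ 2 > 0` to `V i i`. -/

theorem Matrix.mul_diagonal_mul_transpose_apply_self {ι R : Type*} [Fintype ι] [DecidableEq ι]
    [CommSemiring R] (U : Matrix ι ι R) (d : ι → R) (i : ι) :
    (U * diagonal d * Uᵀ) i i = ∑ j, U i j ^ 2 * d j := by
  rw [mul_apply]
  simp only [mul_diagonal, transpose_apply]
  exact Finset.sum_congr rfl fun j _ => by ring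

theorem Finset.sum_mul_ite_pos_of_sum_mul_pos {ι R : Type*} [Fintype ι] [CommRing R]
    [LinearOrder R] [IsStrictOrderedRing R] {w d : ι → R} (hw : ∀ j, 0 ≤ w j)
    (h : 0 < ∑ j, w j * d j) : 0 < ∑ j, w j * if 0 < d j then 1 else 0 := by
  obtain ⟨j, -, hj⟩ := Finset.exists_lt_of_sum_lt (s := Finset.univ) (f := fun _ => (0 : R))
    (by simpa using h)
  have ⟨hwj, hdj⟩ : 0 < w j ∧ 0 < d j :=
    (pos_and_pos_or_neg_and_neg_of_mul_pos hj).resolve_right fun h => (hw j).not_gt h.1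
  refine Finset.sum_pos' (fun k _ => mul_nonneg (hw k) ?_) ⟨j, Finset.mem_univ j, by simpa [hdj]⟩
  split_ifs <;> norm_num

theorem diag_pos_of_diag_pos_general
    (n : ℕ) (U Λ : Matrix (Fin n) (Fin n) ℝ)
    (hΛ : Λ.IsDiag)
    (Xm : Matrix (Fin n) (Fin n) ℝ) (hX : Xm = U * Λ * Uᵀ)
    (D : Matrix (Fin n) (Fin n) ℝ)
    (hD : D = Matrix.diagonal (fun i => if 0 < Λ i i then (1 : ℝ) else 0))
    (V : Matrix (Fin n) (Fin n) ℝ) (hV : V = U * D * Uᵀ)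
    (hpos : ∀ i, 0 < Xm i i) :
    ∀ i, 0 < V i i := by
  intro i
  have hXi := hpos i
  rw [hX, ← hΛ.diagonal_diag, mul_diagonal_mul_transpose_apply_self] at hXi
  rw [hV, hD, mul_diagonal_mul_transpose_apply_self]
  exact Finset.sum_mul_ite_pos_of_sum_mul_pos (fun j => sq_nonneg (U i j)) hXi

/-- If `X = U Λ Uᵀ` with `U` orthogonal and `Λ` diagonal, `D` the 0/1 diagonal matrix
selecting the positive eigenvalues, and `V = U D Uᵀ`, then positivity of all diagonal
entries of `X` implies positivity of all diagonal entries of `V`. -/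
theorem diag_pos_of_diag_pos
    (n : ℕ) (hn : 1 ≤ n) (U Λ : Matrix (Fin n) (Fin n) ℝ)
    (hU : Uᵀ * U = 1) (hΛ : Λ.IsDiag)
    (Xm : Matrix (Fin n) (Fin n) ℝ) (hX : Xm = U * Λ * Uᵀ)
    (D : Matrix (Fin n) (Fin n) ℝ)
    (hD : D = Matrix.diagonal (fun i => if 0 < Λ i i then (1 : ℝ) else 0))
    (V : Matrix (Fin n) (Fin n) ℝ) (hV : V = U * D * Uᵀ)
    (hpos : ∀ i, 0 < Xm i i) :
    ∀ i, 0 < V i i :=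
  diag_pos_of_diag_pos_general n U Λ hΛ Xm hX D hD V hV hpos
end
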